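/- Let X ⊂ ℝ^p, Y ⊂ ℝ^q be compact sets with p ≥ q, α, β nonzero finite positive Radon measures, r > 0, and assume either that φ₁, φ₂ are superlinear strictly convex entropy functions satisfying (C2), or that φ₁ = φ₂ = ι_{{1}} with m(α) = m(β). If (M*, π*) minimizes the unregularized problem CR_rUOT(α,β): inf over (M,π) ∈ F_r × M⁺(X×Y) of −∫⟨Mx,y⟩ dπ + D_{φ₁}(π₁‖α) + D_{φ₂}(π₂‖β), then π* minimizes the Gromov–Wasserstein inner-product problem GW-IP(π₁*, π₂*) among all couplings with the same marginals as π*: π* minimizes ∫∫ (⟨x,x'⟩ − ⟨y,y'⟩)² dπ dπ over π ∈ Π(π₁*, π₂*). -/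

import Mathlib

open MeasureTheory Filter Set Pointwise
open scoped ENNReal NNReal

noncomputable section

/-- The recession slope `φ'_∞ = lim_{x→∞} φ(x)/x` of an entropy function. -/
def phiRecession (φ : ℝ → ℝ≥0∞) : ℝ≥0∞ :=
  Filter.limsup (fun x : ℝ => φ x / ENNReal.ofReal x) Filter.atTop

/-- An entropy function: convex, lower semicontinuous `φ : [0,∞) → [0,∞]` with `φ(1) = 0`. -/
def IsEntropyFunction (φ : ℝ → ℝ≥0∞) : Prop :=
  φ 1 = 0 ∧ LowerSemicontinuous φ ∧
    ∀ x ∈ Set.Ici (0 : ℝ), ∀ y ∈ Set.Ici (0 : ℝ), ∀ t ∈ Set.Icc (0 : ℝ) 1,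
      φ (t * x + (1 - t) * y) ≤ ENNReal.ofReal t * φ x + ENNReal.ofReal (1 - t) * φ y

/-- Strict convexity of an entropy function on its (finiteness) domain. -/
def IsStrictlyConvexEntropy (φ : ℝ → ℝ≥0∞) : Prop :=
  ∀ x ∈ Set.Ici (0 : ℝ), ∀ y ∈ Set.Ici (0 : ℝ), x ≠ y → φ x ≠ ⊤ → φ y ≠ ⊤ →
    ∀ t ∈ Set.Ioo (0 : ℝ) 1,
      φ (t * x + (1 - t) * y) < ENNReal.ofReal t * φ x + ENNReal.ofReal (1 - t) * φ y

/-- `dom φ = {x ∈ [0,∞) : φ(x) < ∞}`. -/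
def phiDom (φ : ℝ → ℝ≥0∞) : Set ℝ := {x | 0 ≤ x ∧ φ x ≠ ⊤}

/-- The entropy function `ι_{{1}}`: `0` at `1` and `+∞` elsewhere. -/
def iotaOne : ℝ → ℝ≥0∞ := fun x => if x = 1 then 0 else ⊤

/-- The φ-divergence `D_φ(μ‖ν) = ∫ φ(dμ/dν) dν + φ'_∞ · μ^⊥(univ)`. -/
def phiDiv {Z : Type*} [MeasurableSpace Z] (φ : ℝ → ℝ≥0∞) (μ ν : Measure Z) : ℝ≥0∞ :=
  (∫⁻ z, φ ((μ.rnDeriv ν z).toReal) ∂ν) + phiRecession φ * μ.singularPart ν Set.univ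

/-- The entropy function `φ_KL(x) = x log x − x + 1` generating the KL divergence. -/
def phiKL : ℝ → ℝ≥0∞ := fun x => ENNReal.ofReal (x * Real.log x - x + 1)

/-- The strong compatibility condition (C2). -/
def StrongCompat (φ₁ φ₂ : ℝ → ℝ≥0∞) (mα mβ : ℝ) : Prop :=
  ((interior (mα • phiDom φ₁) ∩ (mβ • phiDom φ₂)) ∪
    ((mα • phiDom φ₁) ∩ interior (mβ • phiDom φ₂))).Nonempty

/-- The Frobenius norm of a real `q × p` matrix. -/
def frobNorm {q p : ℕ} (M : Matrix (Fin q) (Fin p) ℝ) : ℝ :=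
  Real.sqrt (∑ i, ∑ j, (M i j) ^ 2)

/-- `C(π) = ∫ y xᵀ dπ(x,y)`, the entrywise integral of `(x,y) ↦ y xᵀ`. -/
def Cmat {p q : ℕ} (π : Measure ((Fin p → ℝ) × (Fin q → ℝ))) :
    Matrix (Fin q) (Fin p) ℝ :=
  Matrix.of fun i j => ∫ z, z.2 i * z.1 j ∂π

/-- `∫ ⟨Mx, y⟩ dπ(x,y)` with the Euclidean inner product on `ℝ^q`. -/
def ipIntegral {p q : ℕ} (M : Matrix (Fin q) (Fin p) ℝ)
    (π : Measure ((Fin p → ℝ) × (Fin q → ℝ))) : ℝ :=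
  ∫ z, ∑ i, ∑ j, M i j * z.1 j * z.2 i ∂π

/-- `M(π) = r·C(π)/‖C(π)‖_F` if `C(π) ≠ 0`, and `0` otherwise. -/
def Mopt {p q : ℕ} (r : ℝ) (π : Measure ((Fin p → ℝ) × (Fin q → ℝ))) :
    Matrix (Fin q) (Fin p) ℝ :=
  if Cmat π = 0 then 0 else (r / frobNorm (Cmat π)) • Cmat π

/-- The objective of `CR_rUOT_ε(α,β)`:
`(M,π) ↦ −∫⟨Mx,y⟩ dπ + D_{φ₁}(π₁‖α) + D_{φ₂}(π₂‖β) + ε·D_KL(π‖α⊗β)`. -/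
def Jip {p q : ℕ} (α : Measure (Fin p → ℝ)) (β : Measure (Fin q → ℝ))
    (φ₁ φ₂ : ℝ → ℝ≥0∞) (ε : ℝ) (M : Matrix (Fin q) (Fin p) ℝ)
    (π : Measure ((Fin p → ℝ) × (Fin q → ℝ))) : EReal :=
  ((-(ipIntegral M π) : ℝ) : EReal)
    + ((phiDiv φ₁ (π.map Prod.fst) α : ℝ≥0∞) : EReal)
    + ((phiDiv φ₂ (π.map Prod.snd) β : ℝ≥0∞) : EReal)
    + ((ENNReal.ofReal ε * phiDiv phiKL π (α.prod β) : ℝ≥0∞) : EReal)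

/-- The Gromov–Wasserstein inner-product objective `∫∫ (⟨x,x'⟩ − ⟨y,y'⟩)² dπ dπ`. -/
def gwObj {p q : ℕ} (π : Measure ((Fin p → ℝ) × (Fin q → ℝ))) : ℝ :=
  ∫ z, ∫ z', ((∑ j, z.1 j * z'.1 j) - (∑ i, z.2 i * z'.2 i)) ^ 2 ∂π ∂π

/-! Expanding the square, a coupling `π` supported on a compact set satisfies
`gwObj π = ∫∫ ⟨x, x'⟩² dπ₁ dπ₁ - 2 ‖C(π)‖_F² + ∫∫ ⟨y, y'⟩² dπ₂ dπ₂`, so among couplings with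
prescribed marginals, minimizing GW-IP means maximizing `‖C(π)‖_F`. For a fixed plan `π` the
matrix `Mopt r π ∈ F_r` attains `∫ ⟨Mx, y⟩ dπ = r ‖C(π)‖_F`, whereas by Cauchy–Schwarz
`(M*, π*)` attains at most `r ‖C(π*)‖_F`. A competitor `π` with the marginals of `π*` has the same
divergence terms, and these are finite: the compatibility condition yields a feasible plan
`c · α ⊗ β` of finite cost. Hence optimality of `(M*, π*)` against `(Mopt r π, π)` gives
`‖C(π)‖_F ≤ ‖C(π*)‖_F`. -/

section ProductMeasures

variable {E F : Type*} [MeasurableSpace E] [MeasurableSpace F]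

lemma ae_mem_prod {μ : Measure E} {ν : Measure F} [SFinite μ] [SFinite ν] {s : Set E}
    {t : Set F} (hs : ∀ᵐ x ∂μ, x ∈ s) (ht : ∀ᵐ y ∂ν, y ∈ t) : ∀ᵐ z ∂μ.prod ν, z ∈ s ×ˢ t := by
  filter_upwards [Measure.quasiMeasurePreserving_fst.ae hs,
    Measure.quasiMeasurePreserving_snd.ae ht] with z hz₁ hz₂ using ⟨hz₁, hz₂⟩

lemma ae_mem_prod_of_map_eq {μ ν : Measure (E × F)} (h₁ : μ.map Prod.fst = ν.map Prod.fst)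
    (h₂ : μ.map Prod.snd = ν.map Prod.snd) {s : Set E} {t : Set F} (hs : MeasurableSet s)
    (ht : MeasurableSet t) (hν : ∀ᵐ z ∂ν, z ∈ s ×ˢ t) : ∀ᵐ z ∂μ, z ∈ s ×ˢ t := by
  have hμs : ∀ᵐ x ∂μ.map Prod.fst, x ∈ s := by
    rw [h₁]
    exact (ae_map_iff measurable_fst.aemeasurable hs).2 (hν.mono fun _ hz => hz.1)
  have hμt : ∀ᵐ y ∂μ.map Prod.snd, y ∈ t := by
    rw [h₂]
    exact (ae_map_iff measurable_snd.aemeasurable ht).2 (hν.mono fun _ hz => hz.2)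
  filter_upwards [ae_of_ae_map measurable_fst.aemeasurable hμs,
    ae_of_ae_map measurable_snd.aemeasurable hμt] with z hz₁ hz₂ using ⟨hz₁, hz₂⟩

lemma Continuous.integrable_of_ae_mem_isCompact [TopologicalSpace E] [OpensMeasurableSpace E]
    [T2Space E] {μ : Measure E} [IsFiniteMeasure μ] {K : Set E} (hK : IsCompact K)
    (hμK : ∀ᵐ x ∂μ, x ∈ K) {f : E → ℝ} (hf : Continuous f) : Integrable f μ := by
  rw [← Measure.restrict_eq_self_of_ae_mem hμK]
  exact hf.continuousOn.integrableOn_compact hK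

lemma integral_prod_comp_prodMap {E' F' : Type*} [MeasurableSpace E'] [MeasurableSpace F']
    {μ : Measure E} {ν : Measure F} [SFinite μ] [SFinite ν]
    {f : E → E'} {g : F → F'} (hf : Measurable f) (hg : Measurable g)
    {h : E' × F' → ℝ} (hh : StronglyMeasurable h) :
    ∫ w, h (f w.1, g w.2) ∂μ.prod ν = ∫ w, h w ∂(μ.map f).prod (ν.map g) := by
  rw [Measure.map_prod_map μ ν hf hg, integral_map (hf.prodMap hg).aemeasurable
    hh.aestronglyMeasurable]
  rfl

end ProductMeasures

section Frobenius

variable {q p : ℕ}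

lemma frobNorm_nonneg (M : Matrix (Fin q) (Fin p) ℝ) : 0 ≤ frobNorm M :=
  Real.sqrt_nonneg _

lemma frobNorm_sq (M : Matrix (Fin q) (Fin p) ℝ) : frobNorm M ^ 2 = ∑ i, ∑ j, M i j ^ 2 :=
  Real.sq_sqrt (by positivity)

lemma frobNorm_zero : frobNorm (0 : Matrix (Fin q) (Fin p) ℝ) = 0 := by
  simp [frobNorm]

lemma frobNorm_smul (c : ℝ) (M : Matrix (Fin q) (Fin p) ℝ) :
    frobNorm (c • M) = |c| * frobNorm M := by
  simp only [frobNorm, Matrix.smul_apply, smul_eq_mul, mul_pow, ← Finset.mul_sum]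
  rw [Real.sqrt_mul (sq_nonneg c), Real.sqrt_sq_eq_abs]

lemma sum_mul_le_frobNorm_mul_frobNorm (M N : Matrix (Fin q) (Fin p) ℝ) :
    ∑ i, ∑ j, M i j * N i j ≤ frobNorm M * frobNorm N := by
  simp only [frobNorm, ← Fintype.sum_prod_type']
  exact Real.sum_mul_le_sqrt_mul_sqrt _ _ _

lemma frobNorm_div_smul_self_le {r : ℝ} (hr : 0 ≤ r) (C : Matrix (Fin q) (Fin p) ℝ) :
    frobNorm ((r / frobNorm C) • C) ≤ r := by
  rw [frobNorm_smul, abs_of_nonneg (div_nonneg hr (frobNorm_nonneg C))]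
  rcases (frobNorm_nonneg C).eq_or_lt with hC | hC
  · simp [← hC, hr]
  · rw [div_mul_cancel₀ _ hC.ne']

lemma sum_div_smul_self_mul_self (r : ℝ) (C : Matrix (Fin q) (Fin p) ℝ) :
    ∑ i, ∑ j, ((r / frobNorm C) • C) i j * C i j = r * frobNorm C := by
  simp only [Matrix.smul_apply, smul_eq_mul, mul_assoc, ← Finset.mul_sum, ← sq, ← frobNorm_sq]
  rcases (frobNorm_nonneg C).eq_or_lt with hC | hC
  · simp [← hC]
  · field_simp

end Frobenius

lemma Mopt_eq_smul {p q : ℕ} (r : ℝ) (π : Measure ((Fin p → ℝ) × (Fin q → ℝ))) :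
    Mopt r π = (r / frobNorm (Cmat π)) • Cmat π := by
  unfold Mopt
  split_ifs with h <;> simp [h]

section Couplings

variable {p q : ℕ} {π : Measure ((Fin p → ℝ) × (Fin q → ℝ))} [IsFiniteMeasure π]
  {K : Set ((Fin p → ℝ) × (Fin q → ℝ))}

lemma ipIntegral_eq_sum (hK : IsCompact K) (hπK : ∀ᵐ z ∂π, z ∈ K)
    (M : Matrix (Fin q) (Fin p) ℝ) : ipIntegral M π = ∑ i, ∑ j, M i j * Cmat π i j := by
  have hint : ∀ i j,
      Integrable (fun z : (Fin p → ℝ) × (Fin q → ℝ) => M i j * z.1 j * z.2 i) π :=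
    fun i j => (by fun_prop : Continuous _).integrable_of_ae_mem_isCompact hK hπK
  rw [ipIntegral, integral_finsetSum _ fun i _ => integrable_finsetSum _ fun j _ => hint i j]
  refine Finset.sum_congr rfl fun i _ => ?_
  rw [integral_finsetSum _ fun j _ => hint i j]
  refine Finset.sum_congr rfl fun j _ => ?_
  rw [Cmat, Matrix.of_apply, ← integral_const_mul]
  simp only [mul_assoc, mul_comm (_ : ℝ) (_ : ℝ)]

lemma integral_prod_self_inner_mul_inner (hK : IsCompact K) (hπK : ∀ᵐ z ∂π, z ∈ K) :
    ∫ w, (∑ j, w.1.1 j * w.2.1 j) * (∑ i, w.1.2 i * w.2.2 i) ∂π.prod π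
      = frobNorm (Cmat π) ^ 2 := by
  have hint : ∀ i j, Integrable
      (fun w : ((Fin p → ℝ) × (Fin q → ℝ)) × ((Fin p → ℝ) × (Fin q → ℝ)) =>
        (w.1.2 i * w.1.1 j) * (w.2.2 i * w.2.1 j)) (π.prod π) :=
    fun i j => (by fun_prop : Continuous _).integrable_of_ae_mem_isCompact (hK.prod hK)
      (ae_mem_prod hπK hπK)
  have hexpand : ∀ w : ((Fin p → ℝ) × (Fin q → ℝ)) × ((Fin p → ℝ) × (Fin q → ℝ)),
      (∑ j, w.1.1 j * w.2.1 j) * (∑ i, w.1.2 i * w.2.2 i)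
        = ∑ i, ∑ j, (w.1.2 i * w.1.1 j) * (w.2.2 i * w.2.1 j) := fun w => by
    rw [Finset.sum_mul_sum, Finset.sum_comm]
    exact Finset.sum_congr rfl fun i _ => Finset.sum_congr rfl fun j _ => by ring
  simp_rw [hexpand]
  rw [frobNorm_sq, integral_finsetSum _ fun i _ => integrable_finsetSum _ fun j _ => hint i j]
  refine Finset.sum_congr rfl fun i _ => ?_
  rw [integral_finsetSum _ fun j _ => hint i j]
  refine Finset.sum_congr rfl fun j _ => ?_
  exact (integral_prod_mul (fun z : (Fin p → ℝ) × (Fin q → ℝ) => z.2 i * z.1 j) _).trans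
    (sq _).symm

lemma gwObj_eq (hK : IsCompact K) (hπK : ∀ᵐ z ∂π, z ∈ K) :
    gwObj π = ∫ w, (∑ j, w.1 j * w.2 j) ^ 2 ∂(π.map Prod.fst).prod (π.map Prod.fst)
      - 2 * frobNorm (Cmat π) ^ 2
      + ∫ w, (∑ i, w.1 i * w.2 i) ^ 2 ∂(π.map Prod.snd).prod (π.map Prod.snd) := by
  have hint : ∀ f : ((Fin p → ℝ) × (Fin q → ℝ)) × ((Fin p → ℝ) × (Fin q → ℝ)) → ℝ,
      Continuous f → Integrable f (π.prod π) :=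
    fun f hf => hf.integrable_of_ae_mem_isCompact (hK.prod hK) (ae_mem_prod hπK hπK)
  set A := fun w : ((Fin p → ℝ) × (Fin q → ℝ)) × ((Fin p → ℝ) × (Fin q → ℝ)) =>
    ∑ j, w.1.1 j * w.2.1 j
  set B := fun w : ((Fin p → ℝ) × (Fin q → ℝ)) × ((Fin p → ℝ) × (Fin q → ℝ)) =>
    ∑ i, w.1.2 i * w.2.2 i
  have hA : Continuous A := by fun_prop
  have hB : Continuous B := by fun_prop
  have hA2 : Integrable (fun w => A w ^ 2) (π.prod π) := hint _ (hA.pow 2)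
  have hB2 : Integrable (fun w => B w ^ 2) (π.prod π) := hint _ (hB.pow 2)
  have hAB : Integrable (fun w => 2 * (A w * B w)) (π.prod π) :=
    hint _ (continuous_const.mul (hA.mul hB))
  calc gwObj π = ∫ w, (A w - B w) ^ 2 ∂π.prod π :=
        (integral_prod (fun w => (A w - B w) ^ 2) (hint _ ((hA.sub hB).pow 2))).symm
    _ = ∫ w, A w ^ 2 ∂π.prod π - 2 * ∫ w, A w * B w ∂π.prod π + ∫ w, B w ^ 2 ∂π.prod π := by
        simp only [sub_sq, mul_assoc]
        rw [integral_add (f := fun w => A w ^ 2 - 2 * (A w * B w)) (hA2.sub hAB) hB2,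
          integral_sub hA2 hAB, integral_const_mul]
    _ = _ := by
        rw [integral_prod_self_inner_mul_inner hK hπK,
          integral_prod_comp_prodMap measurable_fst measurable_fst
            (by fun_prop : Continuous fun w : (Fin p → ℝ) × (Fin p → ℝ) =>
              (∑ j, w.1 j * w.2 j) ^ 2).stronglyMeasurable,
          integral_prod_comp_prodMap measurable_snd measurable_snd
            (by fun_prop : Continuous fun w : (Fin q → ℝ) × (Fin q → ℝ) =>
              (∑ i, w.1 i * w.2 i) ^ 2).stronglyMeasurable]

lemma gwObj_le_of_map_eq {π' : Measure ((Fin p → ℝ) × (Fin q → ℝ))} [IsFiniteMeasure π']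
    (hK : IsCompact K) (hπK : ∀ᵐ z ∂π, z ∈ K) (hπ'K : ∀ᵐ z ∂π', z ∈ K)
    (h₁ : π'.map Prod.fst = π.map Prod.fst) (h₂ : π'.map Prod.snd = π.map Prod.snd)
    (hC : frobNorm (Cmat π') ≤ frobNorm (Cmat π)) : gwObj π ≤ gwObj π' := by
  rw [gwObj_eq hK hπK, gwObj_eq hK hπ'K, h₁, h₂]
  have := pow_le_pow_left₀ (frobNorm_nonneg _) hC 2
  linarith

end Couplings

lemma phiDiv_smul_self {E : Type*} [MeasurableSpace E] (φ : ℝ → ℝ≥0∞) (μ : Measure E)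
    [IsFiniteMeasure μ] {c : ℝ≥0∞} (hc : c ≠ ⊤) : phiDiv φ (c • μ) μ = φ c.toReal * μ univ := by
  have hsing : (c • μ).singularPart μ = 0 :=
    (Measure.singularPart_eq_zero _ _).2 (Measure.AbsolutelyContinuous.rfl.smul_left c)
  have hrn : (c • μ).rnDeriv μ =ᵐ[μ] fun _ => c := by
    filter_upwards [Measure.rnDeriv_smul_left_of_ne_top μ μ hc, Measure.rnDeriv_self μ]
      with z h₁ h₂
    rw [h₁, Pi.smul_apply, h₂, smul_eq_mul, mul_one]
  rw [phiDiv, hsing, Measure.coe_zero, Pi.zero_apply, mul_zero, add_zero,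
    lintegral_congr_ae (hrn.mono fun z hz => by rw [hz]), lintegral_const]

section Objective

variable {p q : ℕ} {α : Measure (Fin p → ℝ)} {β : Measure (Fin q → ℝ)} {φ₁ φ₂ : ℝ → ℝ≥0∞}

lemma Jip_zero_eq (M : Matrix (Fin q) (Fin p) ℝ) (π : Measure ((Fin p → ℝ) × (Fin q → ℝ))) :
    Jip α β φ₁ φ₂ 0 M π = ((-ipIntegral M π : ℝ) : EReal)
      + ((phiDiv φ₁ (π.map Prod.fst) α + phiDiv φ₂ (π.map Prod.snd) β : ℝ≥0∞) : EReal) := by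
  simp [Jip, EReal.coe_ennreal_add, add_assoc]

lemma Jip_zero_ne_top_iff (M : Matrix (Fin q) (Fin p) ℝ)
    (π : Measure ((Fin p → ℝ) × (Fin q → ℝ))) :
    Jip α β φ₁ φ₂ 0 M π ≠ ⊤ ↔
      phiDiv φ₁ (π.map Prod.fst) α ≠ ⊤ ∧ phiDiv φ₂ (π.map Prod.snd) β ≠ ⊤ := by
  rw [Jip_zero_eq, EReal.add_ne_top_iff_ne_top_right (EReal.coe_ne_bot _) (EReal.coe_ne_top _),
    Ne, EReal.coe_ennreal_eq_top_iff, ← Ne, ENNReal.add_ne_top]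

lemma ipIntegral_le_of_Jip_zero_le {M M' : Matrix (Fin q) (Fin p) ℝ}
    {π π' : Measure ((Fin p → ℝ) × (Fin q → ℝ))}
    (h₁ : π'.map Prod.fst = π.map Prod.fst) (h₂ : π'.map Prod.snd = π.map Prod.snd)
    (hfin : Jip α β φ₁ φ₂ 0 M π ≠ ⊤) (hle : Jip α β φ₁ φ₂ 0 M π ≤ Jip α β φ₁ φ₂ 0 M' π') :
    ipIntegral M' π' ≤ ipIntegral M π := by
  obtain ⟨hd₁, hd₂⟩ := (Jip_zero_ne_top_iff M π).1 hfin
  rw [Jip_zero_eq, Jip_zero_eq, h₁, h₂] at hle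
  lift phiDiv φ₁ (π.map Prod.fst) α + phiDiv φ₂ (π.map Prod.snd) β to ℝ≥0
    using ENNReal.add_ne_top.2 ⟨hd₁, hd₂⟩ with D
  rw [EReal.coe_nnreal_eq_coe_real, ← EReal.coe_add, ← EReal.coe_add,
    EReal.coe_le_coe_iff] at hle
  linarith

end Objective

lemma StrongCompat.exists_mul_eq_mul {φ₁ φ₂ : ℝ → ℝ≥0∞} {mα mβ : ℝ}
    (h : StrongCompat φ₁ φ₂ mα mβ) : ∃ a ∈ phiDom φ₁, ∃ b ∈ phiDom φ₂, mα * a = mβ * b := by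
  obtain ⟨s, hs⟩ := h
  have hs' : s ∈ mα • phiDom φ₁ ∩ mβ • phiDom φ₂ :=
    hs.elim (fun h => ⟨interior_subset h.1, h.2⟩) fun h => ⟨h.1, interior_subset h.2⟩
  obtain ⟨⟨a, ha, rfl⟩, b, hb, hab⟩ := hs'
  exact ⟨a, ha, b, hb, hab.symm⟩

lemma one_mem_phiDom_iotaOne : (1 : ℝ) ∈ phiDom iotaOne :=
  ⟨zero_le_one, by simp [iotaOne]⟩

-- The marginals of `c • α ⊗ β` have constant densities `c · m(β) = a` and `c · m(α) = b`.
lemma Jip_zero_smul_prod_ne_top {p q : ℕ} {α : Measure (Fin p → ℝ)} {β : Measure (Fin q → ℝ)}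
    [IsFiniteMeasure α] [IsFiniteMeasure β] (hβ : β ≠ 0) {φ₁ φ₂ : ℝ → ℝ≥0∞} {a b : ℝ}
    (ha : a ∈ phiDom φ₁) (hb : b ∈ phiDom φ₂) (hab : (α univ).toReal * a = (β univ).toReal * b)
    (M : Matrix (Fin q) (Fin p) ℝ) :
    Jip α β φ₁ φ₂ 0 M (ENNReal.ofReal (a / (β univ).toReal) • α.prod β) ≠ ⊤ := by
  have hmβ : (β univ).toReal ≠ 0 :=
    ENNReal.toReal_ne_zero.2 ⟨Measure.measure_univ_ne_zero.2 hβ, measure_ne_top β _⟩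
  set c := ENNReal.ofReal (a / (β univ).toReal)
  have hc : c ≠ ⊤ := ENNReal.ofReal_ne_top
  have hcβ : (c * β univ).toReal = a := by
    rw [ENNReal.toReal_mul, ENNReal.toReal_ofReal (div_nonneg ha.1 ENNReal.toReal_nonneg),
      div_mul_cancel₀ _ hmβ]
  have hcα : (c * α univ).toReal = b := by
    rw [ENNReal.toReal_mul, ENNReal.toReal_ofReal (div_nonneg ha.1 ENNReal.toReal_nonneg),
      div_mul_eq_mul_div, mul_comm a, hab, mul_div_cancel_left₀ _ hmβ]
  rw [Jip_zero_ne_top_iff, Measure.map_smul, Measure.map_smul, Measure.map_fst_prod,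
    Measure.map_snd_prod, smul_smul, smul_smul,
    phiDiv_smul_self _ _ (ENNReal.mul_ne_top hc (measure_ne_top _ _)),
    phiDiv_smul_self _ _ (ENNReal.mul_ne_top hc (measure_ne_top _ _)), hcβ, hcα]
  exact ⟨ENNReal.mul_ne_top ha.2 (measure_ne_top _ _),
    ENNReal.mul_ne_top hb.2 (measure_ne_top _ _)⟩

theorem stmt10_general {p q : ℕ}
    (X : Set (Fin p → ℝ)) (Y : Set (Fin q → ℝ))
    (hX : IsCompact X) (hY : IsCompact Y)
    (α : Measure (Fin p → ℝ)) (β : Measure (Fin q → ℝ))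
    [IsFiniteMeasure α] [IsFiniteMeasure β]
    (hβ : β ≠ 0)
    (hαsupp : α Xᶜ = 0) (hβsupp : β Yᶜ = 0)
    (r : ℝ) (hr : 0 < r)
    (φ₁ φ₂ : ℝ → ℝ≥0∞)
    (hφ : (IsEntropyFunction φ₁ ∧ IsEntropyFunction φ₂ ∧
            phiRecession φ₁ = ⊤ ∧ phiRecession φ₂ = ⊤ ∧
            IsStrictlyConvexEntropy φ₁ ∧ IsStrictlyConvexEntropy φ₂ ∧
            StrongCompat φ₁ φ₂ (α Set.univ).toReal (β Set.univ).toReal) ∨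
          (φ₁ = iotaOne ∧ φ₂ = iotaOne ∧ α Set.univ = β Set.univ))
    (Mstar : Matrix (Fin q) (Fin p) ℝ)
    (πstar : Measure ((Fin p → ℝ) × (Fin q → ℝ)))
    (hMstar : frobNorm Mstar ≤ r) (hπfin : IsFiniteMeasure πstar)
    (hπsupp : πstar ((X ×ˢ Y)ᶜ) = 0)
    (hmin : ∀ (M : Matrix (Fin q) (Fin p) ℝ)
      (π : Measure ((Fin p → ℝ) × (Fin q → ℝ))),
      frobNorm M ≤ r → IsFiniteMeasure π → π ((X ×ˢ Y)ᶜ) = 0 →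
      Jip α β φ₁ φ₂ 0 Mstar πstar ≤ Jip α β φ₁ φ₂ 0 M π) :
    ∀ π : Measure ((Fin p → ℝ) × (Fin q → ℝ)), IsFiniteMeasure π →
      π.map Prod.fst = πstar.map Prod.fst → π.map Prod.snd = πstar.map Prod.snd →
      gwObj πstar ≤ gwObj π := by
  intro π hπ h₁ h₂
  have hK : IsCompact (X ×ˢ Y) := hX.prod hY
  have hπK : ∀ᵐ z ∂π, z ∈ X ×ˢ Y :=
    ae_mem_prod_of_map_eq h₁ h₂ hX.measurableSet hY.measurableSet hπsupp
  obtain ⟨a, ha, b, hb, hab⟩ : ∃ a ∈ phiDom φ₁, ∃ b ∈ phiDom φ₂,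
      (α univ).toReal * a = (β univ).toReal * b := by
    rcases hφ with ⟨-, -, -, -, -, -, hC⟩ | ⟨rfl, rfl, hm⟩
    · exact hC.exists_mul_eq_mul
    · exact ⟨1, one_mem_phiDom_iotaOne, 1, one_mem_phiDom_iotaOne, by rw [hm]⟩
  have hfin : Jip α β φ₁ φ₂ 0 Mstar πstar ≠ ⊤ :=
    ne_top_of_le_ne_top (Jip_zero_smul_prod_ne_top hβ ha hb hab 0)
      (hmin 0 _ (frobNorm_zero.trans_le hr.le) (Measure.smul_finite _ ENNReal.ofReal_ne_top)
        (Measure.ae_smul_measure (ae_mem_prod hαsupp hβsupp) _))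
  have hip := ipIntegral_le_of_Jip_zero_le h₁ h₂ hfin
    (hmin (Mopt r π) π (Mopt_eq_smul r π ▸ frobNorm_div_smul_self_le hr.le _) hπ hπK)
  rw [Mopt_eq_smul, ipIntegral_eq_sum hK hπK, sum_div_smul_self_mul_self,
    ipIntegral_eq_sum hK hπsupp] at hip
  have hCS := sum_mul_le_frobNorm_mul_frobNorm Mstar (Cmat πstar)
  have hMC := mul_le_mul_of_nonneg_right hMstar (frobNorm_nonneg (Cmat πstar))
  exact gwObj_le_of_map_eq hK hπsupp hπK h₁ h₂ (le_of_mul_le_mul_left (by linarith) hr)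

/-- **Optimal CR_rUOT plans solve GW-IP between their own marginals.** If `(M*, π*)`
minimizes the unregularized problem `CR_rUOT(α,β)`, then `π*` minimizes the
Gromov–Wasserstein inner-product objective among all couplings with the same marginals
as `π*`. -/
theorem stmt10 {p q : ℕ} (hpq : q ≤ p)
    (X : Set (Fin p → ℝ)) (Y : Set (Fin q → ℝ))
    (hX : IsCompact X) (hY : IsCompact Y)
    (α : Measure (Fin p → ℝ)) (β : Measure (Fin q → ℝ))
    [IsFiniteMeasure α] [IsFiniteMeasure β]
    (hα : α ≠ 0) (hβ : β ≠ 0)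
    (hαsupp : α Xᶜ = 0) (hβsupp : β Yᶜ = 0)
    (r : ℝ) (hr : 0 < r)
    (φ₁ φ₂ : ℝ → ℝ≥0∞)
    (hφ : (IsEntropyFunction φ₁ ∧ IsEntropyFunction φ₂ ∧
            phiRecession φ₁ = ⊤ ∧ phiRecession φ₂ = ⊤ ∧
            IsStrictlyConvexEntropy φ₁ ∧ IsStrictlyConvexEntropy φ₂ ∧
            StrongCompat φ₁ φ₂ (α Set.univ).toReal (β Set.univ).toReal) ∨
          (φ₁ = iotaOne ∧ φ₂ = iotaOne ∧ α Set.univ = β Set.univ))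
    (Mstar : Matrix (Fin q) (Fin p) ℝ)
    (πstar : Measure ((Fin p → ℝ) × (Fin q → ℝ)))
    (hMstar : frobNorm Mstar ≤ r) (hπfin : IsFiniteMeasure πstar)
    (hπsupp : πstar ((X ×ˢ Y)ᶜ) = 0)
    (hmin : ∀ (M : Matrix (Fin q) (Fin p) ℝ)
      (π : Measure ((Fin p → ℝ) × (Fin q → ℝ))),
      frobNorm M ≤ r → IsFiniteMeasure π → π ((X ×ˢ Y)ᶜ) = 0 →
      Jip α β φ₁ φ₂ 0 Mstar πstar ≤ Jip α β φ₁ φ₂ 0 M π) :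
    ∀ π : Measure ((Fin p → ℝ) × (Fin q → ℝ)), IsFiniteMeasure π →
      π.map Prod.fst = πstar.map Prod.fst → π.map Prod.snd = πstar.map Prod.snd →
      gwObj πstar ≤ gwObj π :=
  stmt10_general X Y hX hY α β hβ hαsupp hβsupp r hr φ₁ φ₂ hφ Mstar πstar hMstar hπfin hπsupp hmin
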